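/- arXiv:1711.08018 — 5 statements merged into one kernel-verified Lean document; each statement's English description precedes it below -/
import Mathlib

section
/- Let Δ^(1) ≥ Δ^(2) ≥ ⋯ ≥ Δ^(K) > 0 be positive reals sorted in decreasing order. Define H = Σ_{j=1}^K (Δ^(j))^{-2} and H̃ = max_{1≤j≤K} (K+1−j)(Δ^(j))^{-2}. Then H̃ ≤ H ≤ (Σ_{i=1}^K 1/i) · H̃. -/
/-- For positive gaps `Δ^(1) ≥ ⋯ ≥ Δ^(K) > 0` (indexed by `j : Fin K`, 0-based, so
`Δ^(j+1) = Δ j` and `K+1-(j+1) = K - j`), with `H = ∑ j (Δ^(j))⁻²` and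
`H̃ = max_j (K+1-j)(Δ^(j))⁻²`, we have `H̃ ≤ H ≤ (∑_{i=1}^K 1/i)·H̃`. -/
theorem stmt_3 {K : ℕ} (hK : 0 < K) (Δ : Fin K → ℝ) (hpos : ∀ j, 0 < Δ j)
    (hsort : ∀ i j : Fin K, i ≤ j → Δ j ≤ Δ i)
    (H Ht : ℝ) (hH : H = ∑ j, 1 / (Δ j) ^ 2)
    (hHt1 : ∀ j : Fin K, ((K - (j : ℕ) : ℕ) : ℝ) / (Δ j) ^ 2 ≤ Ht)
    (hHt2 : ∃ j : Fin K, Ht = ((K - (j : ℕ) : ℕ) : ℝ) / (Δ j) ^ 2) :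
    Ht ≤ H ∧ H ≤ (∑ i ∈ Finset.range K, 1 / ((i : ℝ) + 1)) * Ht := by
  have hsq : ∀ j : Fin K, (0:ℝ) < (Δ j) ^ 2 := fun j => pow_pos (hpos j) 2
  constructor
  · obtain ⟨j, hj⟩ := hHt2
    have h1 : ∀ i ∈ Finset.Ici j, (1:ℝ) / (Δ j) ^ 2 ≤ 1 / (Δ i) ^ 2 := by
      intro i hi
      have hle : Δ i ≤ Δ j := hsort j i (Finset.mem_Ici.mp hi)
      exact one_div_le_one_div_of_le (hsq i) (pow_le_pow_left₀ (hpos i).le hle 2)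
    have hcard : (Finset.Ici j).card = K - (j : ℕ) := by
      exact Fin.card_Ici j
    have h2 : ((K - (j : ℕ) : ℕ) : ℝ) * (1 / (Δ j) ^ 2) ≤
        ∑ i ∈ Finset.Ici j, 1 / (Δ i) ^ 2 := by
      have := Finset.card_nsmul_le_sum (Finset.Ici j) (fun i => 1 / (Δ i) ^ 2)
        (1 / (Δ j) ^ 2) h1
      rw [hcard] at this
      simpa [nsmul_eq_mul] using this
    have h3 : ∑ i ∈ Finset.Ici j, 1 / (Δ i) ^ 2 ≤ ∑ i, 1 / (Δ i) ^ 2 := by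
      apply Finset.sum_le_sum_of_subset_of_nonneg (Finset.subset_univ _)
      intro i _ _
      positivity
    rw [hH, hj]
    calc ((K - (j : ℕ) : ℕ) : ℝ) / (Δ j) ^ 2
        = ((K - (j : ℕ) : ℕ) : ℝ) * (1 / (Δ j) ^ 2) := by ring
      _ ≤ _ := le_trans h2 h3
  · have key : ∀ j : Fin K, (1:ℝ) / (Δ j) ^ 2 ≤ Ht / ((K : ℝ) - (j : ℕ)) := by
      intro j
      have hjK : (j : ℕ) < K := j.is_lt
      have hpos' : (0:ℝ) < (K : ℝ) - (j : ℕ) := by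
        have : ((j:ℕ):ℝ) < (K:ℝ) := by exact_mod_cast hjK
        linarith
      have h := hHt1 j
      have hcast : ((K - (j : ℕ) : ℕ) : ℝ) = (K : ℝ) - (j : ℕ) := by
        rw [Nat.cast_sub hjK.le]
      rw [hcast] at h
      rw [div_le_div_iff₀ (hsq j) hpos']
      rw [div_le_iff₀ (hsq j)] at h
      nlinarith [hsq j]
    have hsum : H ≤ ∑ j : Fin K, Ht / ((K : ℝ) - (j : ℕ)) := by
      rw [hH]; exact Finset.sum_le_sum fun j _ => key j
    have heq : ∑ j : Fin K, Ht / ((K : ℝ) - (j : ℕ))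
        = (∑ i ∈ Finset.range K, 1 / ((i : ℝ) + 1)) * Ht := by
      rw [Fin.sum_univ_eq_sum_range (fun j => Ht / ((K : ℝ) - j)), Finset.sum_mul,
        ← Finset.sum_range_reflect]
      apply Finset.sum_congr rfl
      intro i hi
      have hi' : i < K := Finset.mem_range.mp hi
      have h1 : K - 1 - i < K := by omega
      have h2 : (K : ℝ) - ((K - 1 - i : ℕ) : ℝ) = (i : ℝ) + 1 := by
        have hn : K - 1 - i + (i + 1) = K := by omega
        have := congrArg (Nat.cast : ℕ → ℝ) hn
        push_cast at this
        linarith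
      rw [h2]
      ring
    linarith [heq ▸ hsum]
end

section
/- Let V be the Biclique class: v ∈ V is the indicator of the edge set S × T where S, T ⊆ [√K] with |S| = |T| = √s (√K, √s positive integers, √s < √K). Then Ψ(V) = 2√s, achieved by swapping a single row (or column). -/
open Finset

lemma card_symmDiff' {α : Type*} [DecidableEq α] (A B : Finset α) :
    (symmDiff A B).card + 2 * (A ∩ B).card = A.card + B.card := by
  have h1 : (A \ B).card + (A ∩ B).card = A.card := Finset.card_sdiff_add_card_inter A B
  have h2 : (B \ A).card + (B ∩ A).card = B.card := Finset.card_sdiff_add_card_inter B A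
  have hd : Disjoint (A \ B) (B \ A) := disjoint_sdiff_sdiff
  have h3 : (symmDiff A B).card = (A \ B).card + (B \ A).card := by
    rw [symmDiff_def, Finset.sup_eq_union, Finset.card_union_of_disjoint hd]
  rw [Finset.inter_comm B A] at h2
  omega

lemma inter_full_eq {α : Type*} [DecidableEq α] {S S' : Finset α} {m : ℕ}
    (hS : S.card = m) (hS' : S'.card = m) (h : (S ∩ S').card = m) : S = S' := by
  have h1 : S ∩ S' = S := Finset.eq_of_subset_of_card_le Finset.inter_subset_left (by omega)
  have h2 : S ∩ S' = S' := Finset.eq_of_subset_of_card_le Finset.inter_subset_right (by omega)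
  rw [← h1, h2]

/-- Biclique class (`√s = m` rows and columns out of `√K = n`): hypotheses are products
`S ×ˢ T` with `|S| = |T| = m`. Any two distinct hypotheses differ in at least `2m` entries,
and a single row swap realizes distance exactly `2m`, i.e. `Ψ(V) = 2√s`. -/
theorem stmt_12 (n m : ℕ) (hm : 0 < m) (hmn : m < n) :
    (∀ S T S' T' : Finset (Fin n), S.card = m → T.card = m → S'.card = m → T'.card = m →
      (S, T) ≠ (S', T') → 2 * m ≤ (symmDiff (S ×ˢ T) (S' ×ˢ T')).card) ∧
    (∃ S T S' T' : Finset (Fin n), S.card = m ∧ T.card = m ∧ S'.card = m ∧ T'.card = m ∧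
      (S, T) ≠ (S', T') ∧ (symmDiff (S ×ˢ T) (S' ×ˢ T')).card = 2 * m) := by
  constructor
  · intro S T S' T' hS hT hS' hT' hne
    have key := card_symmDiff' (S ×ˢ T) (S' ×ˢ T')
    rw [Finset.product_inter_product] at key
    simp only [Finset.card_product, hS, hT, hS', hT'] at key
    set a := (S ∩ S').card with ha
    set b := (T ∩ T').card with hb
    have haS : a ≤ m := hS ▸ Finset.card_le_card Finset.inter_subset_left
    have hbT : b ≤ m := hT ▸ Finset.card_le_card Finset.inter_subset_left
    have hab : a * b + m ≤ m * m := by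
      obtain ⟨k, rfl⟩ : ∃ k, m = k + 1 := ⟨m - 1, by omega⟩
      rcases Nat.lt_or_ge a (k + 1) with h | h
      · have h1 : a * b ≤ k * (k + 1) := Nat.mul_le_mul (by omega) hbT
        nlinarith
      · rcases Nat.lt_or_ge b (k + 1) with h' | h'
        · have h1 : a * b ≤ (k + 1) * k := Nat.mul_le_mul haS (by omega)
          nlinarith
        · exact absurd (Prod.ext (inter_full_eq hS hS' (le_antisymm haS h))
            (inter_full_eq hT hT' (le_antisymm hbT h'))) hne
    linarith [key]
  · have hcard : m ≤ (Finset.univ : Finset (Fin n)).card := by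
      simp only [Finset.card_univ, Fintype.card_fin]; omega
    obtain ⟨S, -, hS⟩ := Finset.exists_subset_card_eq hcard
    obtain ⟨T, -, hT⟩ := Finset.exists_subset_card_eq hcard
    have hSne : S ≠ Finset.univ := fun h => by
      rw [h, Finset.card_univ, Fintype.card_fin] at hS; omega
    obtain ⟨x, hx⟩ : ∃ x, x ∉ S := by
      by_contra h; push_neg at h
      exact hSne (Finset.eq_univ_of_forall h)
    obtain ⟨y, hy⟩ : ∃ y, y ∈ S := Finset.card_pos.mp (by omega)
    set S' := insert x (S.erase y) with hS'def
    have hyx : y ≠ x := fun h => hx (h ▸ hy)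
    have hS' : S'.card = m := by
      rw [hS'def, Finset.card_insert_of_notMem (fun h => hx (Finset.erase_subset _ _ h)),
        Finset.card_erase_of_mem hy, hS]
      omega
    have hySnot : y ∉ S' := by simp [hS'def, hyx]
    have hne : (S, T) ≠ (S', T) := by
      intro h
      have hSS : S = S' := congrArg Prod.fst h
      exact hySnot (hSS ▸ hy)
    refine ⟨S, T, S', T, hS, hT, hS', hT, hne, ?_⟩
    have key := card_symmDiff' (S ×ˢ T) (S' ×ˢ T)
    rw [Finset.product_inter_product] at key
    have hinter : S ∩ S' = S.erase y := by
      rw [hS'def, Finset.inter_insert_of_notMem hx,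
        Finset.inter_eq_right.mpr (Finset.erase_subset _ _)]
    rw [hinter, Finset.inter_self] at key
    simp only [Finset.card_product, Finset.card_erase_of_mem hy, hS, hT, hS'] at key
    obtain ⟨k, rfl⟩ : ∃ k, m = k + 1 := ⟨m - 1, by omega⟩
    simp only [Nat.add_sub_cancel] at key
    nlinarith [key]
end

section
/- Let a > 0 and b ∈ ℝ. For any real t ≥ (2/a)·max(log(1/a) − b, 0), it holds that a·t + b ≥ log t. -/
lemma log_le_half_aux (x : ℝ) (hx : 0 < x) : Real.log x ≤ x / 2 := by
  have hs : 0 < Real.sqrt x := Real.sqrt_pos.mpr hx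
  have h1 : Real.log (Real.sqrt x) ≤ Real.sqrt x - 1 := Real.log_le_sub_one_of_pos hs
  have h2 : Real.log x = 2 * Real.log (Real.sqrt x) := by
    rw [Real.log_sqrt hx.le]; ring
  have h3 : Real.sqrt x ^ 2 = x := Real.sq_sqrt hx.le
  nlinarith [sq_nonneg (Real.sqrt x - 2)]

/-- Lemma 8 of Antos et al. (2010): for `a > 0` and any
`t ≥ (2/a)·max(log(1/a) − b, 0)` with `t > 0`, we have `a·t + b ≥ log t`. -/
theorem stmt_14 (a b t : ℝ) (ha : 0 < a) (ht0 : 0 < t)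
    (ht : (2 / a) * max (Real.log (1 / a) - b) 0 ≤ t) :
    Real.log t ≤ a * t + b := by
  have hat : Real.log (a * t) ≤ a * t / 2 := log_le_half_aux _ (by positivity)
  have hlog : Real.log (a * t) = Real.log a + Real.log t :=
    Real.log_mul (ne_of_gt ha) (ne_of_gt ht0)
  have hinv : Real.log (1 / a) = -Real.log a := by
    rw [one_div, Real.log_inv]
  have hmax : Real.log (1 / a) - b ≤ max (Real.log (1 / a) - b) 0 := le_max_left _ _
  have h2 : (2 / a) * max (Real.log (1 / a) - b) 0 ≤ t := ht
  have h3 : 2 * max (Real.log (1 / a) - b) 0 ≤ a * t := by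
    have := mul_le_mul_of_nonneg_left h2 ha.le
    have ha' : a ≠ 0 := ne_of_gt ha
    calc 2 * max (Real.log (1 / a) - b) 0
        = a * (2 / a * max (Real.log (1 / a) - b) 0) := by field_simp
      _ ≤ a * t := this
  nlinarith [hmax]
end

section
/- Let Δ ∈ (0,1], let V ⊆ {0,1}^K be finite with minimum distance Ψ and volume parameter Φ, and define Δ_t = min{1, sqrt((8/t)(Φ + log(Kπ²t²/δ)/Ψ))} for t ≥ 1. If T ≥ (144/Δ²)·(Φ + (2·log(144/(Δ²Ψ)) + 2·log(Kπ²/δ))/Ψ), then Δ_T < Δ/3. -/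
/-- Explicit resolution of the transcendental sample-size condition: with
`Δ_t = min{1, √((8/t)(Φ + log(Kπ²t²/δ)/Ψ))}`, if
`T ≥ (144/Δ²)(Φ + (2log(144/(Δ²Ψ)) + 2log(Kπ²/δ))/Ψ)` then `Δ_T < Δ/3`. -/
theorem stmt_17 (K : ℕ) (hK : 1 ≤ K) (δ Φ Ψ Δ : ℝ) (hδ : δ ∈ Set.Ioo (0 : ℝ) 1)
    (hΦ : 0 < Φ) (hΨ : 0 < Ψ) (hΔ : Δ ∈ Set.Ioc (0 : ℝ) 1)
    (T : ℕ) (hT1 : 1 ≤ T)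
    (hT : (144 / Δ ^ 2) *
        (Φ + (2 * Real.log (144 / (Δ ^ 2 * Ψ)) + 2 * Real.log (K * Real.pi ^ 2 / δ)) / Ψ)
      ≤ T) :
    min 1 (Real.sqrt ((8 / T) * (Φ + Real.log (K * Real.pi ^ 2 * T ^ 2 / δ) / Ψ)))
      < Δ / 3 := by
  obtain ⟨hδ0, hδ1⟩ := hδ
  obtain ⟨hΔ0, hΔ1⟩ := hΔ
  have hπ : (0:ℝ) < Real.pi := Real.pi_pos
  have hπ3 : (3:ℝ) < Real.pi := Real.pi_gt_three
  have hT0 : (0:ℝ) < (T:ℝ) := by exact_mod_cast hT1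
  have hK0 : (1:ℝ) ≤ (K:ℝ) := by exact_mod_cast hK
  have hA : (0:ℝ) < (K:ℝ) * Real.pi ^ 2 / δ := by positivity
  set L := Real.log ((K:ℝ) * Real.pi ^ 2 / δ) with hLdef
  set c := Δ ^ 2 * Ψ with hc
  have hc0 : (0:ℝ) < c := by positivity
  set lt := Real.log (T:ℝ) with hlt
  set lc := Real.log (288 / c) with hlc
  -- split log
  have hlogsplit : Real.log ((K:ℝ) * Real.pi ^ 2 * (T:ℝ) ^ 2 / δ) = L + 2 * lt := by
    rw [show (K:ℝ) * Real.pi ^ 2 * (T:ℝ) ^ 2 / δ = ((K:ℝ) * Real.pi ^ 2 / δ) * (T:ℝ) ^ 2 by ring,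
      Real.log_mul (ne_of_gt hA) (by positivity), Real.log_pow]
    push_cast
    ring
  -- log T bound: log T + log(c/288) ≤ T*c/288 - 1, and log(c/288) = -lc
  have hlog1 : lt + Real.log (c / 288) ≤ (T:ℝ) * (c / 288) - 1 := by
    have h := Real.log_le_sub_one_of_pos (show (0:ℝ) < (T:ℝ) * (c / 288) by positivity)
    rwa [Real.log_mul hT0.ne' (by positivity)] at h
  have hinv : Real.log (c / 288) = - lc := by
    rw [hlc, ← Real.log_inv, inv_div]
  have hlogT : 288 * lt ≤ (T:ℝ) * c + 288 * lc - 288 := by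
    rw [hinv] at hlog1; nlinarith [hlog1]
  -- rewrite log(144/c)
  have h144 : Real.log (144 / c) = lc - Real.log 2 := by
    rw [hlc, ← Real.log_div (by positivity) (by norm_num)]
    congr 1
    ring
  -- clear denominators in hT
  have h2' : 144 * (Φ * Ψ + 2 * (lc - Real.log 2) + 2 * L) ≤ c * (T:ℝ) := by
    rw [h144] at hT
    have hΔ2 : (0:ℝ) < Δ ^ 2 := by positivity
    rw [div_mul_eq_mul_div, div_le_iff₀ hΔ2] at hT
    have h3 : Φ + (2 * (lc - Real.log 2) + 2 * L) / Ψ ≤ (T:ℝ) * Δ ^ 2 / 144 := by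
      linarith
    rw [add_div' _ _ _ hΨ.ne', div_le_div_iff₀ hΨ (by norm_num)] at h3
    nlinarith [h3]
  have hL0 : 0 ≤ L := Real.log_nonneg (by
    rw [le_div_iff₀ hδ0]
    nlinarith)
  have hlog2 : Real.log 2 < 1 := by
    have := Real.log_two_lt_d9
    linarith
  -- key inequality
  have key : 72 * (Φ * Ψ + L + 2 * lt) < c * (T:ℝ) := by
    linarith [hlogT, h2', hL0, hlog2]
  have key2 : Φ + (L + 2 * lt) / Ψ < Δ ^ 2 * (T:ℝ) / 72 := by
    rw [add_div' _ _ _ hΨ.ne', div_lt_div_iff₀ hΨ (by norm_num)]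
    rw [hc] at key
    linarith
  refine lt_of_le_of_lt (min_le_right _ _) ?_
  rw [Real.sqrt_lt' (by positivity : (0:ℝ) < Δ / 3), hlogsplit]
  calc 8 / (T:ℝ) * (Φ + (L + 2 * lt) / Ψ)
      < 8 / (T:ℝ) * (Δ ^ 2 * (T:ℝ) / 72) := by
        exact mul_lt_mul_of_pos_left key2 (by positivity)
    _ = (Δ / 3) ^ 2 := by field_simp; ring
end

section
/- Deterministic elimination step: suppose for some round t and all v ∈ V, |⟨v* − v, μ̂_t − μ̄⟩| ≤ Δ_t·d(v*,v), where μ̄ satisfies ⟨v* − v, μ̄⟩ ≥ ⟨v* − v, μ⟩ for all v ∈ V, and v* = argmax⟨v,μ⟩. If Δ_t < Δ_a/3 where Δ_a = min_{v : a ∈ v ⊖ v*} ⟨μ, v* − v⟩/d(v*,v), then for every v ∈ V with a ∈ v ⊖ v*: ⟨v* − v, μ̂_t⟩ > 2·Δ_t·d(v*,v). In particular, for x = Σᵢ αᵢ vᵢ ∈ conv(V) with every vᵢ satisfying a ∈ vᵢ ⊖ v*, we get ⟨v* − x, μ̂_t⟩ > Δ_t·‖v* − x‖₁ + Δ_t.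 -/
/-- Deterministic elimination step. If the normalized regret bound
`|⟨v*−v, μ̂−μ̄⟩| ≤ Δ_t·d(v*,v)` holds for all `v ∈ V`, where `μ̄` dominates in the sense
`⟨v*−v, μ̄⟩ ≥ ⟨v*−v, μ⟩`, `v*` maximizes `⟨·,μ⟩`, and `Δ_t < Δ_a/3` for the arm gap
`Δ_a = min_{v : a ∈ v ⊖ v*} ⟨μ, v*−v⟩/d(v*,v)`, then every `v ∈ V` disagreeing with `v*`
at `a` has `⟨v*−v, μ̂⟩ > 2Δ_t·d(v*,v)`; and for any convex combination `x = ∑ αᵢ wᵢ` of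
such hypotheses, `⟨v*−x, μ̂⟩ > Δ_t‖v*−x‖₁ + Δ_t`. -/
theorem stmt_19 {K : ℕ} (V : Set (Fin K → ℝ))
    (hV01 : ∀ v ∈ V, ∀ b, v b = 0 ∨ v b = 1)
    (vstar : Fin K → ℝ) (hvstar : vstar ∈ V)
    (μ μbar μhat : Fin K → ℝ) (Δt : ℝ) (hΔt : 0 < Δt)
    (a : Fin K) (Δa : ℝ)
    (hmax : ∀ v ∈ V, ∑ b, v b * μ b ≤ ∑ b, vstar b * μ b)
    (hΔa : ∀ v ∈ V, v a ≠ vstar a →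
      Δa ≤ (∑ b, μ b * (vstar b - v b)) / (∑ b, |vstar b - v b|))
    (hdev : ∀ v ∈ V, |∑ b, (vstar b - v b) * (μhat b - μbar b)| ≤ Δt * ∑ b, |vstar b - v b|)
    (hbar : ∀ v ∈ V, ∑ b, (vstar b - v b) * μ b ≤ ∑ b, (vstar b - v b) * μbar b)
    (hgap : Δt < Δa / 3) :
    (∀ v ∈ V, v a ≠ vstar a →
      2 * Δt * (∑ b, |vstar b - v b|) < ∑ b, (vstar b - v b) * μhat b) ∧
    (∀ (ι : Type) [Fintype ι] (α : ι → ℝ) (w : ι → Fin K → ℝ),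
      (∀ i, w i ∈ V) → (∀ i, w i a ≠ vstar a) → (∀ i, 0 ≤ α i) → ∑ i, α i = 1 →
      Δt * (∑ b, |vstar b - ∑ i, α i * w i b|) + Δt
        < ∑ b, (vstar b - ∑ i, α i * w i b) * μhat b) := by
  have hD1 : ∀ v ∈ V, v a ≠ vstar a → 1 ≤ ∑ b, |vstar b - v b| := by
    intro v hv hne
    have ha : |vstar a - v a| = 1 := by
      rcases hV01 v hv a with h1 | h1 <;> rcases hV01 vstar hvstar a with h2 | h2 <;>
        simp [h1, h2] at hne ⊢
    calc (1:ℝ) = |vstar a - v a| := ha.symm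
      _ ≤ ∑ b, |vstar b - v b| :=
        Finset.single_le_sum (f := fun b => |vstar b - v b|) (fun b _ => abs_nonneg _) (Finset.mem_univ a)
  have h1 : ∀ v ∈ V, v a ≠ vstar a →
      2 * Δt * (∑ b, |vstar b - v b|) < ∑ b, (vstar b - v b) * μhat b := by
    intro v hv hne
    have hD := hD1 v hv hne
    have hDpos : 0 < ∑ b, |vstar b - v b| := by linarith
    have hmu : Δa * (∑ b, |vstar b - v b|) ≤ ∑ b, (vstar b - v b) * μ b := by
      have h := hΔa v hv hne
      rw [le_div_iff₀ hDpos] at h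
      calc Δa * (∑ b, |vstar b - v b|) ≤ ∑ b, μ b * (vstar b - v b) := h
        _ = ∑ b, (vstar b - v b) * μ b := Finset.sum_congr rfl fun b _ => by ring
    have hbar' := hbar v hv
    have hdev' := abs_le.mp (hdev v hv)
    have key : ∑ b, (vstar b - v b) * μhat b
        = ∑ b, (vstar b - v b) * μbar b + ∑ b, (vstar b - v b) * (μhat b - μbar b) := by
      rw [← Finset.sum_add_distrib]
      exact Finset.sum_congr rfl fun b _ => by ring
    nlinarith [mul_pos (show (0:ℝ) < Δa - 3*Δt by linarith) hDpos]
  refine ⟨h1, ?_⟩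
  intro ι _ α w hwV hwa hα hsum
  have hdiff : ∀ b, vstar b - ∑ i, α i * w i b = ∑ i, α i * (vstar b - w i b) := by
    intro b
    have h : ∑ i, α i * (vstar b - w i b)
        = (∑ i, α i) * vstar b - ∑ i, α i * w i b := by
      rw [Finset.sum_mul, ← Finset.sum_sub_distrib]
      exact Finset.sum_congr rfl fun i _ => by ring
    rw [h, hsum, one_mul]
  have hexp : ∑ b, (vstar b - ∑ i, α i * w i b) * μhat b
      = ∑ i, α i * ∑ b, (vstar b - w i b) * μhat b := by
    calc ∑ b, (vstar b - ∑ i, α i * w i b) * μhat b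
        = ∑ b, ∑ i, α i * ((vstar b - w i b) * μhat b) := by
          refine Finset.sum_congr rfl fun b _ => ?_
          rw [hdiff b, Finset.sum_mul]
          exact Finset.sum_congr rfl fun i _ => by ring
      _ = ∑ i, ∑ b, α i * ((vstar b - w i b) * μhat b) := Finset.sum_comm
      _ = ∑ i, α i * ∑ b, (vstar b - w i b) * μhat b := by
          refine Finset.sum_congr rfl fun i _ => ?_
          rw [Finset.mul_sum]
  have htri : ∑ b, |vstar b - ∑ i, α i * w i b|
      ≤ ∑ i, α i * ∑ b, |vstar b - w i b| := by
    calc ∑ b, |vstar b - ∑ i, α i * w i b|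
        ≤ ∑ b, ∑ i, α i * |vstar b - w i b| := by
          refine Finset.sum_le_sum fun b _ => ?_
          rw [hdiff b]
          calc |∑ i, α i * (vstar b - w i b)| ≤ ∑ i, |α i * (vstar b - w i b)| :=
                Finset.abs_sum_le_sum_abs _ _
            _ = ∑ i, α i * |vstar b - w i b| := Finset.sum_congr rfl fun i _ => by
                rw [abs_mul, abs_of_nonneg (hα i)]
      _ = ∑ i, ∑ b, α i * |vstar b - w i b| := Finset.sum_comm
      _ = ∑ i, α i * ∑ b, |vstar b - w i b| := by
          refine Finset.sum_congr rfl fun i _ => ?_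
          rw [Finset.mul_sum]
  obtain ⟨j, hj⟩ : ∃ j, 0 < α j := by
    by_contra h
    push_neg at h
    have : ∑ i, α i ≤ 0 := Finset.sum_nonpos fun i _ => h i
    linarith
  have hstrict : ∑ i, α i * (2 * Δt * ∑ b, |vstar b - w i b|)
      < ∑ i, α i * ∑ b, (vstar b - w i b) * μhat b :=
    Finset.sum_lt_sum
      (fun i _ => mul_le_mul_of_nonneg_left (h1 (w i) (hwV i) (hwa i)).le (hα i))
      ⟨j, Finset.mem_univ j, mul_lt_mul_of_pos_left (h1 (w j) (hwV j) (hwa j)) hj⟩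
  have hS1 : 1 ≤ ∑ i, α i * ∑ b, |vstar b - w i b| := by
    rw [← hsum]
    refine Finset.sum_le_sum fun i _ => ?_
    nlinarith [hD1 (w i) (hwV i) (hwa i), hα i]
  have heq : ∑ i, α i * (2 * Δt * ∑ b, |vstar b - w i b|)
      = 2 * Δt * ∑ i, α i * ∑ b, |vstar b - w i b| := by
    rw [Finset.mul_sum]
    exact Finset.sum_congr rfl fun i _ => by ring
  rw [hexp]
  nlinarith [mul_le_mul_of_nonneg_left htri hΔt.le,
    mul_le_mul_of_nonneg_left hS1 hΔt.le]
end
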